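/- arXiv:1602.07555 — 6 statements merged into one kernel-verified Lean document; each statement's English description precedes it below -/
import Mathlib

section
/- The functions p(a + b√2) = a and q(a + b√2) = b√2 on Q[√2] satisfy p + q = id, i.e., the identity function on Q[√2] is the sum of two nonconstant periodic functions. -/
/-- p + q is the identity on Q[√2], and p, q are nonconstant periodic. -/
theorem stmt_1 (p q : ℝ → ℝ) (hp : ∀ a b : ℚ, p (a + b * Real.sqrt 2) = a)
    (hq : ∀ a b : ℚ, q (a + b * Real.sqrt 2) = b * Real.sqrt 2) :
    (∀ a b : ℚ, p (a + b * Real.sqrt 2) + q (a + b * Real.sqrt 2) = a + b * Real.sqrt 2) ∧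
    (∃ T : ℝ, T ≠ 0 ∧ ∀ a b : ℚ, p ((a + b * Real.sqrt 2) + T) = p (a + b * Real.sqrt 2)) ∧
    (∃ T : ℝ, T ≠ 0 ∧ ∀ a b : ℚ, q ((a + b * Real.sqrt 2) + T) = q (a + b * Real.sqrt 2)) ∧
    (∃ a b a' b' : ℚ, p (a + b * Real.sqrt 2) ≠ p (a' + b' * Real.sqrt 2)) ∧
    (∃ a b a' b' : ℚ, q (a + b * Real.sqrt 2) ≠ q (a' + b' * Real.sqrt 2)) := by
  have s2 : Real.sqrt 2 ≠ 0 := by positivity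
  refine ⟨fun a b => by rw [hp, hq], ⟨Real.sqrt 2, s2, fun a b => ?_⟩,
    ⟨1, one_ne_zero, fun a b => ?_⟩, ⟨0, 0, 1, 0, ?_⟩, ⟨0, 0, 0, 1, ?_⟩⟩
  · have : (a : ℝ) + b * Real.sqrt 2 + Real.sqrt 2 = a + ((b + 1 : ℚ)) * Real.sqrt 2 := by
      push_cast; ring
    rw [this, hp, hp]
  · have : (a : ℝ) + b * Real.sqrt 2 + 1 = ((a + 1 : ℚ)) + b * Real.sqrt 2 := by
      push_cast; ring
    rw [this, hq, hq]
  · rw [hp, hp]; norm_num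
  · rw [hq, hq]; push_cast; simpa using s2.symm
end

section
/- An additive function f : R → R is everywhere surjective if and only if it is surjective and not injective. -/
/-- an additive function is everywhere surjective iff it is surjective
and not injective. -/
theorem stmt_10 (f : ℝ → ℝ) (hadd : ∀ x y : ℝ, f (x + y) = f x + f y) :
    (∀ a b : ℝ, a < b → ∀ y : ℝ, ∃ x : ℝ, a < x ∧ x < b ∧ f x = y) ↔
      (Function.Surjective f ∧ ¬ Function.Injective f) := by
  have hf0 : f 0 = 0 := by
    have := hadd 0 0; simp at this; linarith
  constructor
  · intro h
    constructor
    · intro y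
      obtain ⟨x, _, _, hx⟩ := h 0 1 one_pos y
      exact ⟨x, hx⟩
    · intro hinj
      obtain ⟨x, hx0, _, hx⟩ := h 0 1 one_pos 0
      have : x = 0 := hinj (by rw [hx, hf0])
      linarith
  · rintro ⟨hsurj, hninj⟩ a b hab y
    -- get c ≠ 0 with f c = 0
    obtain ⟨u, v, huv, hne⟩ : ∃ u v : ℝ, f u = f v ∧ u ≠ v := by
      by_contra hc
      push_neg at hc
      exact hninj fun u v h => hc u v h
    have hker : ∃ c : ℝ, 0 < c ∧ f c = 0 := by
      have h1 : f (v + (u - v)) = f v + f (u - v) := hadd v (u - v)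
      rw [show v + (u - v) = u by ring, huv] at h1
      have hfc : f (u - v) = 0 := by linarith
      rcases lt_or_gt_of_ne (sub_ne_zero.mpr hne) with h | h
      · refine ⟨-(u - v), by linarith, ?_⟩
        have h2 := hadd (u - v) (-(u - v)); rw [add_neg_cancel, hf0, hfc] at h2; linarith
      · exact ⟨u - v, h, hfc⟩
    obtain ⟨c, hc0, hfc⟩ := hker
    -- f of rational multiples of c is 0
    let F : ℝ →+ ℝ := AddMonoidHom.mk' f hadd
    have hq : ∀ q : ℚ, f ((q : ℝ) * c) = 0 := by
      intro q
      have := map_ratCast_smul F ℚ ℚ q c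
      simp only [Rat.smul_def, smul_eq_mul] at this
      have hF : F c = f c := rfl
      rw [hF, hfc, mul_zero] at this
      exact this
    obtain ⟨z, hz⟩ := hsurj y
    obtain ⟨q, hq1, hq2⟩ := exists_rat_btwn (show (a - z) / c < (b - z) / c by
      apply div_lt_div_of_pos_right _ hc0; linarith)
    refine ⟨z + q * c, ?_, ?_, ?_⟩
    · have := (div_lt_iff₀ hc0).mp hq1; linarith
    · have := (lt_div_iff₀ hc0).mp hq2; linarith
    · rw [hadd, hq, hz, add_zero]
end

section
/- An additive function f : R → R that is not of the form f(x) = kx has a graph that is dense in R². -/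
/-- an additive function not of the form x ↦ k·x has dense graph. -/
theorem stmt_11 (f : ℝ → ℝ) (hadd : ∀ x y : ℝ, f (x + y) = f x + f y)
    (hnl : ¬ ∃ k : ℝ, ∀ x : ℝ, f x = k * x) :
    Dense {P : ℝ × ℝ | P.2 = f P.1} := by
  -- f as an additive monoid hom
  have hf0 : f 0 = 0 := by
    have := hadd 0 0; simpa using this.symm
  set F : ℝ →+ ℝ := AddMonoidHom.mk' f hadd with hF
  have hQ : ∀ (q : ℚ) (x : ℝ), f (q • x) = q • f x := fun q x => map_rat_smul F q x
  -- find b with f b ≠ f 1 * b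
  obtain ⟨b, hb⟩ : ∃ b : ℝ, f b ≠ f 1 * b := by
    by_contra h
    push_neg at h
    exact hnl ⟨f 1, h⟩
  set v1 : ℝ × ℝ := (1, f 1)
  set v2 : ℝ × ℝ := (b, f b)
  -- the linear map (s,t) ↦ s•v1 + t•v2
  let L : (ℝ × ℝ) →ₗ[ℝ] (ℝ × ℝ) :=
    { toFun := fun p => p.1 • v1 + p.2 • v2
      map_add' := by intro p q; simp [add_smul]; abel
      map_smul' := by intro c p; simp [smul_smul] }
  have hLinj : Function.Injective L := by
    rw [← LinearMap.ker_eq_bot, LinearMap.ker_eq_bot']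
    intro p hp
    have h1 : p.1 * 1 + p.2 * b = 0 := congrArg Prod.fst hp
    have h2 : p.1 * f 1 + p.2 * f b = 0 := congrArg Prod.snd hp
    have hp1 : p.1 = -(p.2 * b) := by linarith
    have : p.2 * (f b - f 1 * b) = 0 := by
      rw [hp1] at h2; ring_nf at h2 ⊢; linarith
    have hp2 : p.2 = 0 := by
      rcases mul_eq_zero.1 this with h | h
      · exact h
      · exact absurd (by linarith) hb
    have : p.1 = 0 := by rw [hp1, hp2]; ring
    exact Prod.ext this hp2
  have hLsurj : Function.Surjective L :=
    (LinearMap.injective_iff_surjective).1 hLinj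
  let e : (ℝ × ℝ) ≃ₗ[ℝ] (ℝ × ℝ) := LinearEquiv.ofBijective L ⟨hLinj, hLsurj⟩
  let E := e.toContinuousLinearEquiv
  -- dense range of rationals in ℝ × ℝ
  have hdr : DenseRange (fun p : ℚ × ℚ => ((p.1 : ℝ), (p.2 : ℝ))) :=
    DenseRange.prodMap Rat.denseRange_cast Rat.denseRange_cast
  have hdense : DenseRange (fun p : ℚ × ℚ => E ((p.1 : ℝ), (p.2 : ℝ))) :=
    E.surjective.denseRange.comp hdr E.continuous
  refine hdense.mono ?_
  rintro _ ⟨⟨q1, q2⟩, rfl⟩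
  show (E ((q1 : ℝ), (q2 : ℝ))).2 = f (E ((q1 : ℝ), (q2 : ℝ))).1
  have hE : E ((q1 : ℝ), (q2 : ℝ)) = (q1 • v1 + q2 • v2 : ℝ × ℝ) := rfl
  rw [hE]
  have h1 : (q1 • v1 + q2 • v2 : ℝ × ℝ).1 = q1 • (1 : ℝ) + q2 • b := by
    simp [v1, v2, Rat.smul_def]
  have h2 : (q1 • v1 + q2 • v2 : ℝ × ℝ).2 = q1 • f 1 + q2 • f b := by
    simp [v1, v2, Rat.smul_def]
  rw [h1, h2, hadd, hQ, hQ]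
end

section
/- There exists an everywhere surjective function f : R → R. -/
open Cardinal

noncomputable def Qsub : AddSubgroup ℝ := (Rat.castHom ℝ).toAddMonoidHom.range

/-- there exists an everywhere surjective function ℝ → ℝ. -/
theorem stmt_15 :
    ∃ f : ℝ → ℝ, ∀ a b : ℝ, a < b → ∀ y : ℝ, ∃ x : ℝ, a < x ∧ x < b ∧ f x = y := by
  classical
  have hsurj : Function.Surjective
      (fun p : (ℝ ⧸ Qsub) × ℚ => (Quotient.out p.1 : ℝ) + (p.2 : ℝ)) := by
    intro x
    set c : ℝ ⧸ Qsub := QuotientAddGroup.mk x with hc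
    have hout : (QuotientAddGroup.mk (Quotient.out c) : ℝ ⧸ Qsub) = c := Quotient.out_eq c
    have hmem : -(Quotient.out c) + x ∈ Qsub := by
      rw [← QuotientAddGroup.eq]
      rw [hout, hc]
    obtain ⟨r, hr⟩ := hmem
    refine ⟨(c, r), ?_⟩
    simp only
    have : (r : ℝ) = -(Quotient.out c) + x := hr
    linarith
  have h1 : #ℝ ≤ #((ℝ ⧸ Qsub) × ℚ) := Cardinal.mk_le_of_surjective hsurj
  have h2 : #((ℝ ⧸ Qsub) × ℚ) = #(ℝ ⧸ Qsub) * ℵ₀ := by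
    simp [Cardinal.mk_prod]
  have hR : ℵ₀ < #ℝ := by rw [Cardinal.mk_real]; exact Cardinal.aleph0_lt_continuum
  have hle : #ℝ ≤ #(ℝ ⧸ Qsub) := by
    rcases le_total (#(ℝ ⧸ Qsub)) ℵ₀ with h | h
    · exfalso
      have : #ℝ ≤ ℵ₀ := by
        calc #ℝ ≤ #(ℝ ⧸ Qsub) * ℵ₀ := h2 ▸ h1
        _ ≤ ℵ₀ * ℵ₀ := by exact mul_le_mul_left h _
        _ = ℵ₀ := by simp
      exact absurd this (not_le.mpr hR)
    · calc #ℝ ≤ #(ℝ ⧸ Qsub) * ℵ₀ := h2 ▸ h1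
      _ = #(ℝ ⧸ Qsub) := Cardinal.mul_aleph0_eq h
  obtain ⟨i⟩ := Cardinal.le_def _ _ |>.mp hle
  let g : (ℝ ⧸ Qsub) → ℝ := Function.invFun i
  have hg : ∀ y, g (i y) = y := fun y => Function.leftInverse_invFun i.injective y
  refine ⟨fun x => g (QuotientAddGroup.mk x), ?_⟩
  intro a b hab y
  set c : ℝ ⧸ Qsub := i y with hcdef
  set x0 : ℝ := Quotient.out c with hx0
  obtain ⟨q, hq1, hq2⟩ := exists_rat_btwn (show a - x0 < b - x0 by linarith)
  refine ⟨x0 + q, by linarith, by linarith, ?_⟩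
  have hmk : (QuotientAddGroup.mk (x0 + q) : ℝ ⧸ Qsub) = c := by
    have h1 : (QuotientAddGroup.mk x0 : ℝ ⧸ Qsub) = c := Quotient.out_eq c
    rw [← h1, QuotientAddGroup.eq]
    exact ⟨-q, by simp⟩
  simp only [hmk, hcdef, hg]
end

section
/- If the graph of a function f : R → R is dense in R², then the hypograph H = {(x, y) : y ≤ f(x)} is a connected subset of R². -/
/-- Auxiliary lemma: the contradiction step for a separation of the hypograph
into ray-saturated pieces. -/
lemma aux16 (f : ℝ → ℝ) (hdense : Dense {P : ℝ × ℝ | P.2 = f P.1})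
    (u v : Set (ℝ × ℝ)) (hu : IsOpen u) (hv : IsOpen v)
    (A B : Set ℝ)
    (hA : ∀ x ∈ A, ∀ y ≤ f x, (x, y) ∈ u)
    (hB : ∀ x ∈ B, ∀ y ≤ f x, (x, y) ∈ v)
    (hunion : ∀ x, x ∈ A ∨ x ∈ B)
    (x₀ : ℝ) (hx₀A : x₀ ∈ A) (hx₀B : x₀ ∈ closure B)
    (hempty : ∀ p : ℝ × ℝ, p.2 ≤ f p.1 → p ∈ u → p ∈ v → False) : False := by
  by_cases hcase : ∀ δ > 0, ∃ x', x' ∈ B ∧ |x' - x₀| < δ ∧ 0 ≤ f x'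
  · set y := min (f x₀) 0 with hy
    have hyu : (x₀, y) ∈ u := hA x₀ hx₀A y (min_le_left _ _)
    obtain ⟨ε, hε, hball⟩ := Metric.isOpen_iff.mp hu _ hyu
    obtain ⟨x', hx'B, hx'd, hx'f⟩ := hcase ε hε
    have h1 : y ≤ f x' := le_trans (min_le_right _ _) hx'f
    have h2 : (x', y) ∈ v := hB x' hx'B y h1
    have h3 : (x', y) ∈ u := by
      apply hball
      rw [Metric.mem_ball, Prod.dist_eq]
      simp [Real.dist_eq, hx'd, hε]
    exact hempty (x', y) h1 h3 h2
  · push_neg at hcase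
    obtain ⟨δ₀, hδ₀, hBneg⟩ := hcase
    obtain ⟨x₁, hx₁B, hx₁d⟩ := Metric.mem_closure_iff.mp hx₀B (δ₀ / 2) (by linarith)
    rw [Real.dist_eq] at hx₁d
    have hx₁d' : |x₁ - x₀| < δ₀ / 2 := by rw [abs_sub_comm]; exact hx₁d
    have hfx₁ : f x₁ < 0 := hBneg x₁ hx₁B (by linarith [abs_nonneg (x₁ - x₀)])
    set y := f x₁ - 1 with hydef
    have hyv : (x₁, y) ∈ v := hB x₁ hx₁B y (by linarith)
    obtain ⟨ε, hε, hball⟩ := Metric.isOpen_iff.mp hv _ hyv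
    set ε' := min ε (δ₀ / 2) with hε'def
    have hε'pos : 0 < ε' := lt_min hε (by linarith)
    have hε'1 : ε' ≤ ε := min_le_left _ _
    have hε'2 : ε' ≤ δ₀ / 2 := min_le_right _ _
    have hopen : IsOpen (Set.Ioo (x₁ - ε') (x₁ + ε') ×ˢ Set.Ioi (0:ℝ)) :=
      isOpen_Ioo.prod isOpen_Ioi
    have hne : (Set.Ioo (x₁ - ε') (x₁ + ε') ×ˢ Set.Ioi (0:ℝ)).Nonempty :=
      ⟨(x₁, 1), ⟨⟨by linarith, by linarith⟩, by norm_num⟩⟩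
    obtain ⟨P, hPU, hPg⟩ := hdense.inter_open_nonempty _ hopen hne
    obtain ⟨hPx, hPy⟩ := hPU
    have hPg' : P.2 = f P.1 := hPg
    have hfx : 0 < f P.1 := hPg' ▸ hPy
    have hxx₁ : |P.1 - x₁| < ε' := by
      rw [abs_lt]
      obtain ⟨h1, h2⟩ := hPx
      constructor <;> linarith
    have hxA : P.1 ∈ A := by
      rcases hunion P.1 with h | h
      · exact h
      · exfalso
        have hd : |P.1 - x₀| < δ₀ := by
          calc |P.1 - x₀| ≤ |P.1 - x₁| + |x₁ - x₀| := abs_sub_le _ _ _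
            _ < ε' + δ₀ / 2 := by linarith
            _ ≤ δ₀ := by linarith
        linarith [hBneg P.1 h hd]
    have hyu : (P.1, y) ∈ u := hA P.1 hxA y (by linarith)
    have hyv' : (P.1, y) ∈ v := by
      apply hball
      rw [Metric.mem_ball, Prod.dist_eq]
      simp only [Real.dist_eq, sub_self, abs_zero]
      rw [max_eq_left (abs_nonneg _)]
      linarith
    exact hempty (P.1, y) (by linarith) hyu hyv'

/-- if the graph of f is dense in ℝ², its hypograph is connected. -/
theorem stmt_16 (f : ℝ → ℝ) (hdense : Dense {P : ℝ × ℝ | P.2 = f P.1}) :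
    IsConnected {P : ℝ × ℝ | P.2 ≤ f P.1} := by
  constructor
  · exact ⟨(0, f 0), show f 0 ≤ f 0 from le_refl _⟩
  intro u v hu hv hsub ⟨p, hpH, hpu⟩ ⟨q, hqH, hqv⟩
  by_contra hne
  have hempty : ∀ P : ℝ × ℝ, P.2 ≤ f P.1 → P ∈ u → P ∈ v → False :=
    fun P h1 h2 h3 => hne ⟨P, h1, h2, h3⟩
  -- each vertical ray lies entirely in u or entirely in v
  have hray : ∀ x : ℝ, (∀ y ≤ f x, (x, y) ∈ u) ∨ (∀ y ≤ f x, (x, y) ∈ v) := by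
    intro x
    by_contra hc
    push_neg at hc
    obtain ⟨⟨y₁, hy₁, hy₁u⟩, ⟨y₂, hy₂, hy₂v⟩⟩ := hc
    have hpc : IsPreconnected ({x} ×ˢ Set.Iic (f x)) :=
      isPreconnected_singleton.prod isPreconnected_Iic
    have hsub' : {x} ×ˢ Set.Iic (f x) ⊆ u ∪ v := by
      rintro ⟨a, b⟩ ⟨ha, hb⟩
      simp only [Set.mem_singleton_iff] at ha
      subst ha
      exact hsub hb
    have h1 : (({x} ×ˢ Set.Iic (f x)) ∩ u).Nonempty := by
      refine ⟨(x, y₂), ⟨rfl, hy₂⟩, ?_⟩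
      rcases hsub (show ((x:ℝ), y₂) ∈ {P : ℝ × ℝ | P.2 ≤ f P.1} from hy₂) with h | h
      · exact h
      · exact absurd h hy₂v
    have h2 : (({x} ×ˢ Set.Iic (f x)) ∩ v).Nonempty := by
      refine ⟨(x, y₁), ⟨rfl, hy₁⟩, ?_⟩
      rcases hsub (show ((x:ℝ), y₁) ∈ {P : ℝ × ℝ | P.2 ≤ f P.1} from hy₁) with h | h
      · exact absurd h hy₁u
      · exact h
    obtain ⟨⟨a, b⟩, ⟨ha, hb⟩, hzu, hzv⟩ := hpc u v hu hv hsub' h1 h2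
    simp only [Set.mem_singleton_iff] at ha
    subst ha
    exact hempty (a, b) hb hzu hzv
  set A : Set ℝ := {x | ∀ y ≤ f x, (x, y) ∈ u} with hAdef
  set B : Set ℝ := {x | ∀ y ≤ f x, (x, y) ∈ v} with hBdef
  have hA : ∀ x ∈ A, ∀ y ≤ f x, (x, y) ∈ u := fun x hx => hx
  have hB : ∀ x ∈ B, ∀ y ≤ f x, (x, y) ∈ v := fun x hx => hx
  have hunion : ∀ x, x ∈ A ∨ x ∈ B := hray
  have hdisj : ∀ x, x ∈ A → x ∈ B → False := fun x hxA hxB =>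
    hempty (x, f x) (le_refl _) (hxA _ (le_refl _)) (hxB _ (le_refl _))
  have hpA : p.1 ∈ A := by
    rcases hunion p.1 with h | h
    · exact h
    · exact absurd (hempty p hpH hpu (h p.2 hpH)) not_false
  have hqB : q.1 ∈ B := by
    rcases hunion q.1 with h | h
    · exact absurd (hempty q hqH (h q.2 hqH) hqv) not_false
    · exact h
  have hcc : (closure A ∩ closure B).Nonempty := by
    by_contra hcc
    rw [Set.not_nonempty_iff_eq_empty] at hcc
    have hAcl : IsClosed A := by
      rw [← closure_eq_iff_isClosed]
      refine subset_antisymm ?_ subset_closure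
      intro z hz
      rcases hunion z with h | h
      · exact h
      · exact absurd (Set.mem_inter hz (subset_closure h)) (by rw [hcc]; exact Set.notMem_empty z)
    have hBcl : IsClosed B := by
      rw [← closure_eq_iff_isClosed]
      refine subset_antisymm ?_ subset_closure
      intro z hz
      rcases hunion z with h | h
      · exact absurd (Set.mem_inter (subset_closure h) hz) (by rw [hcc]; exact Set.notMem_empty z)
      · exact h
    have hAB : A = Bᶜ := by
      ext z
      constructor
      · exact fun hz hz' => hdisj z hz hz'
      · intro hz
        rcases hunion z with h | h
        · exact h
        · exact absurd h hz
    have hAop : IsOpen A := hAB ▸ hBcl.isOpen_compl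
    rcases isClopen_iff.mp ⟨hAcl, hAop⟩ with h | h
    · exact absurd hpA (h ▸ Set.notMem_empty _)
    · exact hdisj q.1 (h ▸ Set.mem_univ _) hqB
  obtain ⟨x₀, hx₀A, hx₀B⟩ := hcc
  rcases hunion x₀ with h | h
  · exact aux16 f hdense u v hu hv A B hA hB hunion x₀ h hx₀B hempty
  · exact aux16 f hdense v u hv hu B A hB hA (fun x => (hunion x).symm) x₀ h hx₀A
      (fun P h1 h2 h3 => hempty P h1 h3 h2)
end

section
/- If f : R → R is everywhere surjective, then its hypograph {(x, y) : y ≤ f(x)} is not path-connected; its path-components are exactly the vertical half-lines {x₀} × (−∞, f(x₀)]. -/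
private lemma aux_17 (f : ℝ → ℝ)
    (hes : ∀ a b : ℝ, a < b → ∀ y : ℝ, ∃ x : ℝ, a < x ∧ x < b ∧ f x = y)
    (γ : unitInterval → ℝ × ℝ) (hc : Continuous γ)
    (hmem : ∀ t, (γ t).2 ≤ f (γ t).1)
    (t₀ t₁ : unitInterval) (hab : (γ t₀).1 < (γ t₁).1) : False := by
  have hg : Continuous fun t => (γ t).1 := hc.fst
  have hh : Continuous fun t => (γ t).2 := hc.snd
  obtain ⟨tm, -, htm⟩ := isCompact_univ.exists_isMinOn ⟨t₀, Set.mem_univ _⟩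
    hh.continuousOn
  set m := (γ tm).2 with hm
  obtain ⟨x, hx1, hx2, hfx⟩ := hes _ _ hab (m - 1)
  have hxIcc : x ∈ Set.Icc ((γ t₀).1) ((γ t₁).1) := ⟨le_of_lt hx1, le_of_lt hx2⟩
  obtain ⟨t, ht⟩ := intermediate_value_univ t₀ t₁ hg hxIcc
  have h1 : (γ t).2 ≤ f x := by rw [← ht]; exact hmem t
  have h2 : m ≤ (γ t).2 := htm (Set.mem_univ t)
  linarith

private lemma key_17 (f : ℝ → ℝ)
    (hes : ∀ a b : ℝ, a < b → ∀ y : ℝ, ∃ x : ℝ, a < x ∧ x < b ∧ f x = y)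
    {P Q : ℝ × ℝ} (h : JoinedIn {P : ℝ × ℝ | P.2 ≤ f P.1} P Q) : P.1 = Q.1 := by
  obtain ⟨γ, hγ⟩ := h
  by_contra hne
  rcases lt_or_gt_of_ne hne with hlt | hgt
  · have := aux_17 f hes γ γ.continuous (fun t => hγ t) 0 1
    simp at this; exact absurd hlt (not_lt.mpr this)
  · have := aux_17 f hes γ γ.continuous (fun t => hγ t) 1 0
    simp at this; exact absurd hgt (not_lt.mpr this)

/-- the hypograph of an everywhere surjective function is not
path-connected; its path-components are exactly the vertical half-lines. -/
theorem stmt_17 (f : ℝ → ℝ)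
    (hes : ∀ a b : ℝ, a < b → ∀ y : ℝ, ∃ x : ℝ, a < x ∧ x < b ∧ f x = y) :
    ¬ IsPathConnected {P : ℝ × ℝ | P.2 ≤ f P.1} ∧
    ∀ x₀ : ℝ,
      {Q : ℝ × ℝ | Q ∈ {P : ℝ × ℝ | P.2 ≤ f P.1} ∧
          JoinedIn {P : ℝ × ℝ | P.2 ≤ f P.1} (x₀, f x₀) Q}
        = {Q : ℝ × ℝ | Q.1 = x₀ ∧ Q.2 ≤ f x₀} := by
  constructor
  · intro hpc
    have h0 : ((0 : ℝ), f 0) ∈ {P : ℝ × ℝ | P.2 ≤ f P.1} := by simp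
    have h1 : ((1 : ℝ), f 1) ∈ {P : ℝ × ℝ | P.2 ≤ f P.1} := by simp
    have := key_17 f hes (hpc.joinedIn _ h0 _ h1)
    norm_num at this
  · intro x₀
    ext Q
    simp only [Set.mem_setOf_eq]
    constructor
    · rintro ⟨hQ, hJ⟩
      have hx := key_17 f hes hJ
      refine ⟨hx.symm, ?_⟩
      have : Q.2 ≤ f Q.1 := hQ
      rwa [← hx] at this
    · rintro ⟨hx, hy⟩
      have hconv : Convex ℝ (({x₀} : Set ℝ) ×ˢ Set.Iic (f x₀)) :=
        (convex_singleton x₀).prod (convex_Iic _)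
      have hsub : (({x₀} : Set ℝ) ×ˢ Set.Iic (f x₀)) ⊆ {P : ℝ × ℝ | P.2 ≤ f P.1} := by
        rintro ⟨a, b⟩ ⟨ha, hb⟩
        simp only [Set.mem_singleton_iff] at ha
        simpa [ha] using hb
      have hmemQ : Q ∈ (({x₀} : Set ℝ) ×ˢ Set.Iic (f x₀)) := ⟨hx, hy⟩
      have hmemP : ((x₀, f x₀) : ℝ × ℝ) ∈ (({x₀} : Set ℝ) ×ˢ Set.Iic (f x₀)) :=
        ⟨rfl, Set.mem_Iic.mpr le_rfl⟩
      have hpc := hconv.isPathConnected ⟨_, hmemP⟩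
      exact ⟨by rw [hx]; exact hy, (hpc.joinedIn _ hmemP _ hmemQ).mono hsub⟩
end
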